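/- Stabilizer of the 2A₅-curve: if (A,B) ∈ SL(2,ℂ) × SL(2,ℂ) and there exists λ ∈ ℂˣ with σ_{A,B}(x₀³y₀y₁² + x₁³y₀²y₁) = λ·(x₀³y₀y₁² + x₁³y₀²y₁), then A and B are both diagonal or both antidiagonal, i.e. (A,B) lies in the subgroup S. -/
import Mathlib


open Matrix

abbrev SL2 := Matrix.SpecialLinearGroup (Fin 2) ℂ

/-- The subgroup `S` of `SL(2,ℂ) × SL(2,ℂ)` consisting of the pairs `(A,B)` with `A`
and `B` both diagonal or both antidiagonal. -/
def Ssub : Subgroup (SL2 × SL2) where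
  carrier := {p |
    ((p.1 : Matrix (Fin 2) (Fin 2) ℂ) 0 1 = 0 ∧ (p.1 : Matrix (Fin 2) (Fin 2) ℂ) 1 0 = 0 ∧
     (p.2 : Matrix (Fin 2) (Fin 2) ℂ) 0 1 = 0 ∧ (p.2 : Matrix (Fin 2) (Fin 2) ℂ) 1 0 = 0) ∨
    ((p.1 : Matrix (Fin 2) (Fin 2) ℂ) 0 0 = 0 ∧ (p.1 : Matrix (Fin 2) (Fin 2) ℂ) 1 1 = 0 ∧
     (p.2 : Matrix (Fin 2) (Fin 2) ℂ) 0 0 = 0 ∧ (p.2 : Matrix (Fin 2) (Fin 2) ℂ) 1 1 = 0)}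
  one_mem' := by
    left
    simp [Matrix.SpecialLinearGroup.coe_one, Matrix.one_apply]
  mul_mem' := by
    intro a b ha hb
    rcases ha with ⟨h1, h2, h3, h4⟩ | ⟨h1, h2, h3, h4⟩ <;>
      rcases hb with ⟨g1, g2, g3, g4⟩ | ⟨g1, g2, g3, g4⟩
    · left
      refine ⟨?_, ?_, ?_, ?_⟩ <;>
        simp [Prod.fst_mul, Prod.snd_mul, Matrix.mul_apply, Fin.sum_univ_two,
          h1, h2, h3, h4, g1, g2, g3, g4]
    · right
      refine ⟨?_, ?_, ?_, ?_⟩ <;>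
        simp [Prod.fst_mul, Prod.snd_mul, Matrix.mul_apply, Fin.sum_univ_two,
          h1, h2, h3, h4, g1, g2, g3, g4]
    · right
      refine ⟨?_, ?_, ?_, ?_⟩ <;>
        simp [Prod.fst_mul, Prod.snd_mul, Matrix.mul_apply, Fin.sum_univ_two,
          h1, h2, h3, h4, g1, g2, g3, g4]
    · left
      refine ⟨?_, ?_, ?_, ?_⟩ <;>
        simp [Prod.fst_mul, Prod.snd_mul, Matrix.mul_apply, Fin.sum_univ_two,
          h1, h2, h3, h4, g1, g2, g3, g4]
  inv_mem' := by
    intro a ha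
    rcases ha with ⟨h1, h2, h3, h4⟩ | ⟨h1, h2, h3, h4⟩
    · left
      refine ⟨?_, ?_, ?_, ?_⟩ <;>
        simp [Prod.fst_inv, Prod.snd_inv, Matrix.SpecialLinearGroup.coe_inv,
          Matrix.adjugate_fin_two, h1, h2, h3, h4]
    · right
      refine ⟨?_, ?_, ?_, ?_⟩ <;>
        simp [Prod.fst_inv, Prod.snd_inv, Matrix.SpecialLinearGroup.coe_inv,
          Matrix.adjugate_fin_two, h1, h2, h3, h4]

open MvPolynomial

/-- The ℂ-algebra endomorphism `σ_{A,B}` of `ℂ[x₀,x₁,y₀,y₁]`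
(variables `X 0 = x₀`, `X 1 = x₁`, `X 2 = y₀`, `X 3 = y₁`) determined by
`x₀ ↦ A₀₀x₀ + A₀₁x₁`, `x₁ ↦ A₁₀x₀ + A₁₁x₁`, `y₀ ↦ B₀₀y₀ + B₀₁y₁`,
`y₁ ↦ B₁₀y₀ + B₁₁y₁`. -/
noncomputable def sigmaAB (A B : SL2) :
    MvPolynomial (Fin 4) ℂ →ₐ[ℂ] MvPolynomial (Fin 4) ℂ :=
  aeval ![C ((A : Matrix (Fin 2) (Fin 2) ℂ) 0 0) * X 0
            + C ((A : Matrix (Fin 2) (Fin 2) ℂ) 0 1) * X 1,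
          C ((A : Matrix (Fin 2) (Fin 2) ℂ) 1 0) * X 0
            + C ((A : Matrix (Fin 2) (Fin 2) ℂ) 1 1) * X 1,
          C ((B : Matrix (Fin 2) (Fin 2) ℂ) 0 0) * X 2
            + C ((B : Matrix (Fin 2) (Fin 2) ℂ) 0 1) * X 3,
          C ((B : Matrix (Fin 2) (Fin 2) ℂ) 1 0) * X 2
            + C ((B : Matrix (Fin 2) (Fin 2) ℂ) 1 1) * X 3]

lemma twoA5_calc (a b c d e f g h l : ℂ) (hl : l ≠ 0)
    (detB : e * h - f * g = 1)
    (e1 : a^3*e*g^2 + c^3*e^2*g = 0)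
    (e2 : a^3*(f*g^2+2*e*g*h) + c^3*(2*e*f*g+e^2*h) = 0)
    (e3 : a^3*(e*h^2+2*f*g*h) + c^3*(f^2*g+2*e*f*h) = l)
    (e4 : a^3*f*h^2 + c^3*f^2*h = 0)
    (e5 : b^3*e*g^2 + d^3*e^2*g = 0)
    (e7 : b^3*(e*h^2+2*f*g*h) + d^3*(f^2*g+2*e*f*h) = 0) :
    (b = 0 ∧ c = 0 ∧ f = 0 ∧ g = 0) ∨ (a = 0 ∧ d = 0 ∧ e = 0 ∧ h = 0) := by
  have cz : ∀ x : ℂ, x ^ 3 = 0 → x = 0 := fun x hx =>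
    pow_eq_zero_iff (by norm_num : (3:ℕ) ≠ 0) |>.mp hx
  have factor : ∀ x y : ℂ, x * y = 0 → x ≠ 0 → y = 0 := fun x y hxy hx =>
    (mul_eq_zero.mp hxy).resolve_left hx
  by_cases hf : f = 0
  · subst hf
    have ehB : e * h = 1 := by linear_combination detB
    have he : e ≠ 0 := left_ne_zero_of_mul_eq_one ehB
    have hh : h ≠ 0 := right_ne_zero_of_mul_eq_one ehB
    have ha : a ≠ 0 := by
      intro h0; apply hl; linear_combination -e3 + (a^2*e*h^2)*h0
    have hg : g = 0 := by
      by_contra hg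
      have t1 : a^3*g + c^3*e = 0 :=
        factor (e*g) _ (by linear_combination e1) (mul_ne_zero he hg)
      have t2 : 2*a^3*g + c^3*e = 0 :=
        factor (e*h) _ (by linear_combination e2) (mul_ne_zero he hh)
      have t3 : a^3*g = 0 := by linear_combination t2 - t1
      rcases mul_eq_zero.mp t3 with t | t
      · exact ha (cz a t)
      · exact hg t
    subst hg
    have hc : c = 0 := by
      have t : c^3 = 0 :=
        factor (e*(e*h)) _ (by linear_combination e2)
          (mul_ne_zero he (mul_ne_zero he hh))
      exact cz c t
    have hb : b = 0 := by
      have t : b^3 = 0 :=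
        factor (e*(h*h)) _ (by linear_combination e7)
          (mul_ne_zero he (mul_ne_zero hh hh))
      exact cz b t
    exact Or.inl ⟨hb, hc, rfl, rfl⟩
  · by_cases hh : h = 0
    · subst hh
      have hfg : f * g = -1 := by linear_combination -detB
      have hg : g ≠ 0 := by
        intro h0; rw [h0, mul_zero] at hfg
        exact one_ne_zero (by linear_combination hfg)
      have hc : c ≠ 0 := by
        intro h0; apply hl; linear_combination -e3 + (c^2*(f^2*g))*h0
      have t2 : a^3*g + 2*c^3*e = 0 :=
        factor (f*g) _ (by linear_combination e2) (mul_ne_zero hf hg)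
      have he : e = 0 := by
        by_contra he
        have t1 : a^3*g + c^3*e = 0 :=
          factor (e*g) _ (by linear_combination e1) (mul_ne_zero he hg)
        have t3 : c^3*e = 0 := by linear_combination t2 - t1
        rcases mul_eq_zero.mp t3 with t | t
        · exact hc (cz c t)
        · exact he t
      subst he
      have ha : a = 0 := by
        have t : a^3*g = 0 := by linear_combination t2
        rcases mul_eq_zero.mp t with t | t
        · exact cz a t
        · exact absurd t hg
      have hd : d = 0 := by
        have t : d^3 = 0 :=
          factor (f*(f*g)) _ (by linear_combination e7)
            (mul_ne_zero hf (mul_ne_zero hf hg))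
        exact cz d t
      exact Or.inr ⟨ha, hd, rfl, rfl⟩
    · exfalso
      have t4 : a^3*h + c^3*f = 0 :=
        factor (f*h) _ (by linear_combination e4) (mul_ne_zero hf hh)
      have t5 : c^3*f*h = l*h := by
        linear_combination h*e3 - (e*h^2+2*f*g*h)*t4 - c^3*f*h*detB
      have hcf : c^3*f = l := mul_right_cancel₀ hh t5
      have hc : c ≠ 0 := by
        intro h0; apply hl; linear_combination -hcf + (c^2*f)*h0
      have t6 : c^3*(e*h + f*g) = 0 := by
        linear_combination h*e2 - (f*g^2+2*e*g*h)*t4 - c^3*(e*h+f*g)*detB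
      have hefg : e*h + f*g = 0 :=
        factor (c^3) _ t6 (pow_ne_zero 3 hc)
      have h2e : (2:ℂ)*(e*h) = 1 := by linear_combination detB + hefg
      have h2g : (2:ℂ)*(f*g) = -1 := by linear_combination hefg - detB
      have he : e ≠ 0 := by
        intro h0; apply one_ne_zero (α := ℂ); linear_combination -h2e + 2*h*h0
      have hg : g ≠ 0 := by
        intro h0; apply one_ne_zero (α := ℂ); linear_combination h2g - 2*f*h0
      have t1 : a^3*g + c^3*e = 0 :=
        factor (e*g) _ (by linear_combination e1) (mul_ne_zero he hg)
      have hc3 : c^3 = 0 := by linear_combination h*t1 - g*t4 - c^3*detB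
      exact hc (cz c hc3)

/-- **Stabilizer of the `2A₅`-curve.** If `(A,B) ∈ SL(2,ℂ) × SL(2,ℂ)` maps the
polynomial `x₀³y₀y₁² + x₁³y₀²y₁` (the curve `C_{2A₅}`) to a nonzero scalar multiple of
itself, then `A` and `B` are both diagonal or both antidiagonal, i.e. `(A,B) ∈ S`. -/
theorem twoA5_stabilizer (A B : SL2)
    (h : ∃ lam : ℂˣ, sigmaAB A B (X 0 ^ 3 * X 2 * X 3 ^ 2 + X 1 ^ 3 * X 2 ^ 2 * X 3)
        = C (lam : ℂ) * (X 0 ^ 3 * X 2 * X 3 ^ 2 + X 1 ^ 3 * X 2 ^ 2 * X 3)) :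
    (A, B) ∈ Ssub := by
  obtain ⟨lam, hl⟩ := h
  have key : ∀ s t u v : ℂ,
      ((A : Matrix (Fin 2) (Fin 2) ℂ) 0 0 * s + (A : Matrix (Fin 2) (Fin 2) ℂ) 0 1 * t) ^ 3
        * ((B : Matrix (Fin 2) (Fin 2) ℂ) 0 0 * u + (B : Matrix (Fin 2) (Fin 2) ℂ) 0 1 * v)
        * ((B : Matrix (Fin 2) (Fin 2) ℂ) 1 0 * u + (B : Matrix (Fin 2) (Fin 2) ℂ) 1 1 * v) ^ 2
      + ((A : Matrix (Fin 2) (Fin 2) ℂ) 1 0 * s + (A : Matrix (Fin 2) (Fin 2) ℂ) 1 1 * t) ^ 3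
        * ((B : Matrix (Fin 2) (Fin 2) ℂ) 0 0 * u + (B : Matrix (Fin 2) (Fin 2) ℂ) 0 1 * v) ^ 2
        * ((B : Matrix (Fin 2) (Fin 2) ℂ) 1 0 * u + (B : Matrix (Fin 2) (Fin 2) ℂ) 1 1 * v)
      = (lam : ℂ) * (s ^ 3 * u * v ^ 2 + t ^ 3 * u ^ 2 * v) := by
    intro s t u v
    have := congrArg (eval ![s, t, u, v]) hl
    simpa [sigmaAB] using this
  have detB : (B : Matrix (Fin 2) (Fin 2) ℂ) 0 0 * (B : Matrix (Fin 2) (Fin 2) ℂ) 1 1 - (B : Matrix (Fin 2) (Fin 2) ℂ) 0 1 * (B : Matrix (Fin 2) (Fin 2) ℂ) 1 0 = 1 := by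
    have h2 := B.2
    rw [Matrix.det_fin_two] at h2
    linear_combination h2
  have hl0 : (lam : ℂ) ≠ 0 := lam.ne_zero
  have main := twoA5_calc ((A : Matrix (Fin 2) (Fin 2) ℂ) 0 0) ((A : Matrix (Fin 2) (Fin 2) ℂ) 0 1) ((A : Matrix (Fin 2) (Fin 2) ℂ) 1 0) ((A : Matrix (Fin 2) (Fin 2) ℂ) 1 1)
    ((B : Matrix (Fin 2) (Fin 2) ℂ) 0 0) ((B : Matrix (Fin 2) (Fin 2) ℂ) 0 1) ((B : Matrix (Fin 2) (Fin 2) ℂ) 1 0) ((B : Matrix (Fin 2) (Fin 2) ℂ) 1 1) (lam : ℂ) hl0 detB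
    (by linear_combination key 1 0 1 0)
    (by linear_combination (key 1 0 1 1) / 2 - (key 1 0 1 (-1)) / 2 - key 1 0 0 1)
    (by linear_combination (key 1 0 1 1) / 2 + (key 1 0 1 (-1)) / 2 - key 1 0 1 0)
    (by linear_combination key 1 0 0 1)
    (by linear_combination key 0 1 1 0)
    (by linear_combination (key 0 1 1 1) / 2 + (key 0 1 1 (-1)) / 2 - key 0 1 1 0)
  rcases main with ⟨h1, h2, h3, h4⟩ | ⟨h1, h2, h3, h4⟩
  · exact Or.inl ⟨h1, h2, h3, h4⟩
  · exact Or.inr ⟨h1, h2, h3, h4⟩
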